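/- For 0 < c ≤ 1, f(u) → +∞ as u → 0⁺. -/

import Mathlib

set_option maxHeartbeats 1000000

/-- The real cube root. -/
noncomputable def realCbrt (x : ℝ) : ℝ :=
  if 0 ≤ x then x ^ ((1 : ℝ) / 3) else -((-x) ^ ((1 : ℝ) / 3))

/-- `a = (1/8)(−1+20c+8c² −(1+8c)^{3/2})`, left endpoint of the support. -/
noncomputable def suppA (c : ℝ) : ℝ :=
  (1 / 8) * (-1 + 20 * c + 8 * c ^ 2 - (1 + 8 * c) ^ ((3 : ℝ) / 2))

/-- `b = (1/8)(−1+20c+8c² +(1+8c)^{3/2})`, right endpoint of the support. -/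
noncomputable def suppB (c : ℝ) : ℝ :=
  (1 / 8) * (-1 + 20 * c + 8 * c ^ 2 + (1 + 8 * c) ^ ((3 : ℝ) / 2))

/-- `d(u) = −2(c−1)³ + 9(1+2c)u + 3√3·√(u(−4u² + (−1+4c(5+2c))u − 4c(c−1)³))`. -/
noncomputable def dFun (c u : ℝ) : ℝ :=
  -2 * (c - 1) ^ 3 + 9 * (1 + 2 * c) * u +
    3 * Real.sqrt 3 *
      Real.sqrt (u * (-4 * u ^ 2 + (-1 + 4 * c * (5 + 2 * c)) * u - 4 * c * (c - 1) ^ 3))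

/-- The density `f` of the limiting spectral distribution of `B`. -/
noncomputable def fDensity (c u : ℝ) : ℝ :=
  (Real.pi * u)⁻¹ *
    Real.sqrt (-u - 5 * (c - 1) ^ 2 / 3
      + (2 : ℝ) ^ ((4 : ℝ) / 3) * (3 * u + (c - 1) ^ 2) * (c - 1) / (3 * realCbrt (dFun c u))
      + (2 : ℝ) ^ ((2 : ℝ) / 3) * (c - 1) * realCbrt (dFun c u) / 3
      + (1 / 48) * (-8 * (c - 1)
          + 2 * (2 : ℝ) ^ ((1 : ℝ) / 3) * (3 * u + (c - 1) ^ 2) / realCbrt (dFun c u)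
          + (2 : ℝ) ^ ((2 : ℝ) / 3) * realCbrt (dFun c u)) ^ 2)

lemma realCbrt_of_nonneg {x : ℝ} (hx : 0 ≤ x) : realCbrt x = x ^ ((1:ℝ)/3) := if_pos hx

lemma realCbrt_pos {x : ℝ} (hx : 0 < x) : 0 < realCbrt x := by
  rw [realCbrt_of_nonneg hx.le]; positivity

lemma realCbrt_cube {x : ℝ} (hx : 0 ≤ x) : (realCbrt x)^3 = x := by
  rw [realCbrt_of_nonneg hx, ← Real.rpow_natCast (x ^ ((1:ℝ)/3)) 3,
    ← Real.rpow_mul hx]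
  norm_num

lemma cbrt2_cube : ((2:ℝ) ^ ((1:ℝ)/3))^3 = 2 := by
  rw [← Real.rpow_natCast ((2:ℝ) ^ ((1:ℝ)/3)) 3, ← Real.rpow_mul (by norm_num : (0:ℝ) ≤ 2)]
  norm_num

lemma cbrt2_pos : 0 < (2:ℝ) ^ ((1:ℝ)/3) := Real.rpow_pos_of_pos (by norm_num) _

lemma rpow23 : (2:ℝ) ^ ((2:ℝ)/3) = ((2:ℝ) ^ ((1:ℝ)/3))^2 := by
  rw [← Real.rpow_natCast ((2:ℝ) ^ ((1:ℝ)/3)) 2, ← Real.rpow_mul (by norm_num : (0:ℝ) ≤ 2)]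
  norm_num

lemma rpow43 : (2:ℝ) ^ ((4:ℝ)/3) = ((2:ℝ) ^ ((1:ℝ)/3))^4 := by
  rw [← Real.rpow_natCast ((2:ℝ) ^ ((1:ℝ)/3)) 4, ← Real.rpow_mul (by norm_num : (0:ℝ) ≤ 2)]
  norm_num

lemma keyIdentity (w r u s : ℝ) (hw : w^3 = 2) (hw0 : w ≠ 0) (hr : r ≠ 0) :
    -u - 5*s^2/3 + w^4*(3*u+s^2)*s/(3*r) + w^2*s*r/3
      + (1/48)*(-8*s + 2*w*(3*u+s^2)/r + w^2*r)^2
    = (r^2 - (3*u+s^2)*w^2)^2/(12*(r^2*w^2)) := by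
  field_simp
  linear_combination (36*w^3*r^4 + 1728*w^3*r*u*s
    + 576*w^3*r*s^3 + 432*w^2*r^2*u + 144*w^2*r^2*s^2 + 72*r^4) * hw

lemma dFun_pos {c u : ℝ} (hc : 0 < c) (hc1 : c ≤ 1) (hu : 0 < u) : 0 < dFun c u := by
  unfold dFun
  have h1 : (0:ℝ) ≤ Real.sqrt 3 := Real.sqrt_nonneg 3
  have h2 : (0:ℝ) ≤ Real.sqrt (u * (-4 * u ^ 2 + (-1 + 4 * c * (5 + 2 * c)) * u - 4 * c * (c - 1) ^ 3)) := Real.sqrt_nonneg _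
  have h3 : (0:ℝ) ≤ 1 - c := by linarith
  nlinarith [mul_nonneg (mul_nonneg h3 h3) h3, mul_nonneg h1 h2, mul_pos hc hu, hu]

lemma fDensity_eq {c u : ℝ} (hc : 0 < c) (hc1 : c ≤ 1) (hu : 0 < u) :
    fDensity c u = (Real.pi * u)⁻¹ *
      Real.sqrt (((realCbrt (dFun c u))^2 - (3*u+(c-1)^2) * ((2:ℝ) ^ ((1:ℝ)/3))^2)^2
        / (12 * ((realCbrt (dFun c u))^2 * ((2:ℝ) ^ ((1:ℝ)/3))^2))) := by
  have hd := dFun_pos hc hc1 hu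
  have hr := realCbrt_pos hd
  unfold fDensity
  congr 1
  congr 1
  rw [rpow43, rpow23]
  linear_combination keyIdentity ((2:ℝ) ^ ((1:ℝ)/3)) (realCbrt (dFun c u)) u (c-1)
    cbrt2_cube (ne_of_gt cbrt2_pos) (ne_of_gt hr)

open Filter in
open scoped Topology in
lemma model_tendsto {C : ℝ} (hC : 0 < C) :
    Tendsto (fun u : ℝ => C * (u ^ ((1:ℝ)/3))⁻¹) (𝓝[>] (0:ℝ)) atTop := by
  apply Tendsto.const_mul_atTop hC
  apply Filter.Tendsto.inv_tendsto_nhdsGT_zero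
  have h0 : Tendsto (fun u : ℝ => u ^ ((1:ℝ)/3)) (𝓝 (0:ℝ)) (𝓝 (0:ℝ)) := by
    have := (Real.continuousAt_rpow_const 0 ((1:ℝ)/3) (Or.inr (by norm_num))).tendsto
    simpa [Real.zero_rpow (by norm_num : ((1:ℝ)/3) ≠ 0)] using this
  apply tendsto_nhdsWithin_of_tendsto_nhds_of_eventually_within
  · exact h0.mono_left nhdsWithin_le_nhds
  · filter_upwards [self_mem_nhdsWithin] with u hu
    exact Real.rpow_pos_of_pos hu _


lemma aux_r_ub (d D₀ M r w : ℝ) (hd_pos : 0 < d) (hd_ub : d ≤ D₀) (hM1 : 1 ≤ M)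
    (hMpos : 0 < M) (hMdef : M = 1 + D₀^2/4) (hw3 : w^3 = 2) (hr3 : r^3 = d) :
    r^2 ≤ M*w^2 := by
  apply le_of_pow_le_pow_left₀ (n := 3) (by norm_num) (mul_nonneg hMpos.le (sq_nonneg w))
  calc (r^2)^3 = (r^3)^2 := by ring
  _ = d^2 := by rw [hr3]
  _ ≤ D₀^2 := by nlinarith [hd_pos, hd_ub]
  _ ≤ 4*M^3 := by
      nlinarith [hMdef, hM1, hMpos,
        mul_nonneg (mul_nonneg hMpos.le (sub_nonneg.2 hM1)) (by linarith : (0:ℝ) ≤ M + 1)]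
  _ = (M*w^2)^3 := by rw [show (M*w^2)^3 = M^3*((w^3)^2) by ring, hw3]; ring

lemma aux_r_lb (t K₂ ε d r w : ℝ) (ht : 0 < t) (hK₂ : 0 < K₂) (hε : 0 < ε)
    (hεt : K₂*ε ≤ t^2) (hd_lb : 2*t^3 + 4*t*K₂*ε ≤ d) (hw3 : w^3 = 2) (hr3 : r^3 = d) :
    (t^2 + K₂*ε)*w^2 ≤ r^2 := by
  apply le_of_pow_le_pow_left₀ (n := 3) (by norm_num) (sq_nonneg r)
  calc ((t^2+K₂*ε)*w^2)^3 = (t^2+K₂*ε)^3*((w^3)^2) := by ring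
  _ = 4*(t^2+K₂*ε)^3 := by rw [hw3]; ring
  _ ≤ (2*t^3+4*t*K₂*ε)^2 := by
      nlinarith [mul_nonneg (sq_nonneg (K₂*ε)) (sub_nonneg.2 hεt),
        mul_nonneg (mul_nonneg (pow_nonneg ht.le 4) hK₂.le) hε.le]
  _ ≤ d^2 := by
      nlinarith [pow_pos ht 3, mul_pos (mul_pos (mul_pos (by norm_num : (0:ℝ)<4) ht) hK₂) hε]
  _ = (r^2)^3 := by rw [← hr3]; ring

lemma aux_gap (t K₂ ε u r w : ℝ) (hε : 0 < ε) (hε2 : ε^2 = u) (hεK : 6*ε ≤ K₂)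
    (hr_lb : (t^2 + K₂*ε)*w^2 ≤ r^2) :
    (K₂/2)*ε*w^2 ≤ r^2 - (3*u+t^2)*w^2 := by
  have h3u : 3*u ≤ (K₂/2)*ε := by nlinarith [mul_nonneg (sub_nonneg.2 hεK) hε.le]
  nlinarith [mul_le_mul_of_nonneg_right h3u (sq_nonneg w)]

lemma aux_frac (G K₂ ε u r w M : ℝ) (hε : 0 < ε) (hε2 : ε^2 = u) (hw : 0 < w) (hr : 0 < r)
    (hM : 0 < M) (hK₂ : 0 < K₂) (hgap : (K₂/2)*ε*w^2 ≤ G) (hr_ub : r^2 ≤ M*w^2) :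
    K₂^2*u/(48*M) ≤ G^2/(12*(r^2*w^2)) := by
  have h1 : ((K₂/2)*ε*w^2)^2 ≤ G^2 := pow_le_pow_left₀ (by positivity) hgap 2
  have h2 : 12*(r^2*w^2) ≤ 12*(M*w^2*w^2) := by
    nlinarith [mul_le_mul_of_nonneg_right hr_ub (sq_nonneg w)]
  have h3 := div_le_div₀ (sq_nonneg G) h1 (by positivity : (0:ℝ) < 12*(r^2*w^2)) h2
  have h4 : ((K₂/2)*ε*w^2)^2/(12*(M*w^2*w^2)) = K₂^2*u/(48*M) := by
    rw [← hε2]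
    field_simp
    ring
  rwa [h4] at h3

lemma aux1_ru (d r w : ℝ) (hd_pos : 0 < d) (hdu : d ≤ 63) (hw3 : w^3 = 2) (hr3 : r^3 = d) :
    r^2 ≤ 10*w^2 := by
  apply le_of_pow_le_pow_left₀ (n := 3) (by norm_num) (by positivity)
  calc (r^2)^3 = (r^3)^2 := by ring
  _ = d^2 := by rw [hr3]
  _ ≤ 63^2 := by nlinarith
  _ ≤ (10*w^2)^3 := by nlinarith [hw3]

lemma aux1_rl (u ε d r w : ℝ) (hu : 0 < u) (hε3 : ε^3 = u) (hdl : 27*u ≤ d)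
    (hw3 : w^3 = 2) (hr3 : r^3 = d) : 5*ε^2*w^2 ≤ r^2 := by
  apply le_of_pow_le_pow_left₀ (n := 3) (by norm_num) (sq_nonneg r)
  calc (5*ε^2*w^2)^3 = 500 * (ε^3)^2 * ((w^3)^2) / 4 := by ring
  _ = 500 * u^2 := by rw [hε3, hw3]; ring
  _ ≤ (27*u)^2 := by nlinarith
  _ ≤ d^2 := by nlinarith
  _ = (r^2)^3 := by rw [← hr3]; ring

lemma aux1_gap (u ε r w : ℝ) (hε : 0 < ε) (hεle : ε ≤ 5/6) (hε3 : ε^3 = u)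
    (hrl : 5*ε^2*w^2 ≤ r^2) : (5/2)*ε^2*w^2 ≤ r^2 - 3*u*w^2 := by
  have h3u : 3*u ≤ (5/2)*ε^2 := by
    nlinarith [mul_nonneg (by linarith : (0:ℝ) ≤ 5/2 - 3*ε) (sq_nonneg ε), hε3]
  nlinarith [mul_le_mul_of_nonneg_right h3u (sq_nonneg w)]

lemma aux1_frac (u ε r w : ℝ) (hε : 0 < ε) (hε3 : ε^3 = u) (hw : 0 < w) (hr : 0 < r)
    (hgap : (5/2)*ε^2*w^2 ≤ r^2 - 3*u*w^2) (hru : r^2 ≤ 10*w^2) :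
    5/96 * (ε^2)^2 ≤ (r^2 - 3*u*w^2)^2 / (12*(r^2*w^2)) := by
  rw [le_div_iff₀ (by positivity)]
  have h1 : ((5/2)*ε^2*w^2)^2 ≤ (r^2 - 3*u*w^2)^2 := pow_le_pow_left₀ (by positivity) hgap 2
  have h2 : ε^4*w^2*r^2 ≤ ε^4*w^2*(10*w^2) := mul_le_mul_of_nonneg_left hru (by positivity)
  nlinarith [h1, h2]

open Filter in
open scoped Topology in
lemma eventual_lower (c : ℝ) (hc : 0 < c) (hc1 : c ≤ 1) :
    ∃ C : ℝ, 0 < C ∧ ∀ᶠ u in 𝓝[>] (0:ℝ), C * (u ^ ((1:ℝ)/3))⁻¹ ≤ fDensity c u := by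
  obtain ⟨w, hwdef⟩ : ∃ x : ℝ, x = (2:ℝ) ^ ((1:ℝ)/3) := ⟨_, rfl⟩
  have hw3 : w^3 = 2 := by rw [hwdef]; exact cbrt2_cube
  have hwpos : 0 < w := by rw [hwdef]; exact cbrt2_pos
  have hwne : w ≠ 0 := ne_of_gt hwpos
  have hπ : 0 < Real.pi := Real.pi_pos
  have hπne : Real.pi ≠ 0 := ne_of_gt hπ
  rcases lt_or_eq_of_le hc1 with hlt | hceq
  · -- case c < 1
    have ht : 0 < 1 - c := by linarith
    have hs3pos : 0 < Real.sqrt 3 := Real.sqrt_pos.2 (by norm_num)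
    obtain ⟨Q, hQdef⟩ : ∃ x : ℝ, x = Real.sqrt (2*c*(1-c)^3) := ⟨_, rfl⟩
    have hQpos : 0 < Q := by
      rw [hQdef]
      exact Real.sqrt_pos.2 (mul_pos (mul_pos two_pos hc) (pow_pos ht 3))
    obtain ⟨K₂, hK₂def⟩ : ∃ x : ℝ, x = 3*Real.sqrt 3*Q/(4*(1-c)) := ⟨_, rfl⟩
    have hK₂pos : 0 < K₂ := by
      rw [hK₂def]
      exact div_pos (mul_pos (mul_pos (by norm_num) hs3pos) hQpos) (by linarith)
    obtain ⟨D₀, hD₀def⟩ : ∃ x : ℝ,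
        x = 2*(1-c)^3 + 27 + 6*Real.sqrt (1+(-1+4*c*(5+2*c))^2+4*c*(1-c)^3) := ⟨_, rfl⟩
    have hD₀pos : 0 < D₀ := by
      rw [hD₀def]
      nlinarith [Real.sqrt_nonneg (1+(-1+4*c*(5+2*c))^2+4*c*(1-c)^3), pow_pos ht 3]
    obtain ⟨M, hMdef⟩ : ∃ x : ℝ, x = 1 + D₀^2/4 := ⟨_, rfl⟩
    have hM1 : 1 ≤ M := by rw [hMdef]; nlinarith [sq_nonneg D₀]
    have hMpos : 0 < M := by linarith
    have hMne : M ≠ 0 := ne_of_gt hMpos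
    have hCpos : 0 < Real.sqrt (K₂^2/(48*M))/Real.pi :=
      div_pos (Real.sqrt_pos.2 (div_pos (pow_pos hK₂pos 2) (by linarith))) hπ
    refine ⟨Real.sqrt (K₂^2/(48*M))/Real.pi, hCpos, ?_⟩
    have hδpos : 0 < min (min 1 (2*c*(1-c)^3/(5+(-1+4*c*(5+2*c))^2)))
        (min (((1-c)^2/K₂)^2) ((K₂/6)^2)) := by
      refine lt_min (lt_min one_pos ?_) (lt_min ?_ ?_)
      · exact div_pos (mul_pos (mul_pos two_pos hc) (pow_pos ht 3)) (by positivity)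
      · exact pow_pos (div_pos (pow_pos ht 2) hK₂pos) 2
      · exact pow_pos (div_pos hK₂pos (by norm_num)) 2
    filter_upwards [Ioo_mem_nhdsGT_of_mem (Set.mem_Ico.2 ⟨le_refl (0:ℝ), hδpos⟩)] with u hu
    obtain ⟨hu0, huδ⟩ := hu
    have hune : u ≠ 0 := ne_of_gt hu0
    have hu1 : u ≤ 1 := le_trans huδ.le (le_trans (min_le_left _ _) (min_le_left _ _))
    have hu2 : (5+(-1+4*c*(5+2*c))^2)*u ≤ 2*c*(1-c)^3 := by
      have h := le_trans huδ.le (le_trans (min_le_left _ _) (min_le_right _ _))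
      rw [le_div_iff₀ (by positivity)] at h
      linarith [h]
    obtain ⟨ε, hεdef⟩ : ∃ x : ℝ, x = Real.sqrt u := ⟨_, rfl⟩
    have hεpos : 0 < ε := by rw [hεdef]; exact Real.sqrt_pos.2 hu0
    have hεne : ε ≠ 0 := ne_of_gt hεpos
    have hε2 : ε^2 = u := by rw [hεdef]; exact Real.sq_sqrt hu0.le
    have hεt : K₂*ε ≤ (1-c)^2 := by
      have h := le_trans huδ.le (le_trans (min_le_right _ _) (min_le_left _ _))
      have h2 : ε ≤ (1-c)^2/K₂ := by
        rw [hεdef]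
        calc Real.sqrt u ≤ Real.sqrt (((1-c)^2/K₂)^2) := Real.sqrt_le_sqrt h
        _ = (1-c)^2/K₂ := Real.sqrt_sq (by positivity)
      rw [le_div_iff₀ hK₂pos] at h2
      linarith
    have hεK : 6*ε ≤ K₂ := by
      have h := le_trans huδ.le (le_trans (min_le_right _ _) (min_le_right _ _))
      have h2 : ε ≤ K₂/6 := by
        rw [hεdef]
        calc Real.sqrt u ≤ Real.sqrt ((K₂/6)^2) := Real.sqrt_le_sqrt h
        _ = K₂/6 := Real.sqrt_sq (by positivity)
      linarith
    -- lower bound on the sqrt argument inside dFun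
    have hX : 0 ≤ -4*u^2 + (-1+4*c*(5+2*c))*u + 2*c*(1-c)^3 := by
      nlinarith [mul_nonneg (sq_nonneg (1+(-1+4*c*(5+2*c)))) hu0.le,
        mul_nonneg (sub_nonneg.2 hu1) hu0.le, hu2]
    have hS_lb : 2*c*(1-c)^3*u ≤ u * (-4 * u ^ 2 + (-1 + 4 * c * (5 + 2 * c)) * u - 4 * c * (c - 1) ^ 3) := by
      nlinarith [mul_nonneg hu0.le hX]
    have hd_pos : 0 < dFun c u := dFun_pos hc hc1 hu0
    have hQε : Q*ε ≤ Real.sqrt (u * (-4 * u ^ 2 + (-1 + 4 * c * (5 + 2 * c)) * u - 4 * c * (c - 1) ^ 3)) := by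
      have h := Real.sqrt_le_sqrt hS_lb
      rwa [Real.sqrt_mul (by positivity : (0:ℝ) ≤ 2*c*(1-c)^3) u, ← hQdef, ← hεdef] at h
    have hd_lb : 2*(1-c)^3 + 3*Real.sqrt 3*Q*ε ≤ dFun c u := by
      unfold dFun
      nlinarith [mul_le_mul_of_nonneg_left hQε (by positivity : (0:ℝ) ≤ 3*Real.sqrt 3),
        mul_pos hc hu0, hu0]
    -- upper bound on dFun
    have hu4 : u^4 ≤ 1 := by nlinarith [sq_nonneg u, sq_nonneg (1-u), sq_nonneg (1+u), mul_nonneg (sub_nonneg.2 hu1) hu0.le]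
    have hS_ub : u * (-4 * u ^ 2 + (-1 + 4 * c * (5 + 2 * c)) * u - 4 * c * (c - 1) ^ 3)
        ≤ 1+(-1+4*c*(5+2*c))^2+4*c*(1-c)^3 := by
      nlinarith [mul_nonneg (mul_nonneg (mul_nonneg hc.le (pow_nonneg ht.le 3)) (sub_nonneg.2 hu1)) (by norm_num : (0:ℝ) ≤ 4),
        sq_nonneg (1 - (-1+4*c*(5+2*c))*u^2),
        mul_nonneg (sq_nonneg (-1+4*c*(5+2*c))) (by linarith : (0:ℝ) ≤ 1 - u^4),
        pow_pos hu0 3]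
    have hs3le2 : Real.sqrt 3 ≤ 2 := by
      rw [show (2:ℝ) = Real.sqrt (2^2) from (Real.sqrt_sq (by norm_num)).symm]
      exact Real.sqrt_le_sqrt (by norm_num)
    have hd_ub : dFun c u ≤ D₀ := by
      have h2 : Real.sqrt (u * (-4 * u ^ 2 + (-1 + 4 * c * (5 + 2 * c)) * u - 4 * c * (c - 1) ^ 3))
          ≤ Real.sqrt (1+(-1+4*c*(5+2*c))^2+4*c*(1-c)^3) := Real.sqrt_le_sqrt hS_ub
      have h3 := mul_le_mul hs3le2 h2 (Real.sqrt_nonneg _) (by norm_num)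
      have h4 : (1+2*c)*u ≤ 3 := by nlinarith
      unfold dFun
      rw [hD₀def]
      nlinarith [h3, h4]
    obtain ⟨r, hrdef⟩ : ∃ x : ℝ, x = realCbrt (dFun c u) := ⟨_, rfl⟩
    have hrpos : 0 < r := by rw [hrdef]; exact realCbrt_pos hd_pos
    have hr3 : r^3 = dFun c u := by rw [hrdef]; exact realCbrt_cube hd_pos.le
    -- r² ≤ M w²
    have hr_ub : r^2 ≤ M*w^2 :=
      aux_r_ub (dFun c u) D₀ M r w hd_pos hd_ub hM1 hMpos hMdef hw3 hr3
    have hK1 : 3*Real.sqrt 3*Q = 4*(1-c)*K₂ := by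
      rw [hK₂def]; field_simp
    have hd_lb' : 2*(1-c)^3 + 4*(1-c)*K₂*ε ≤ dFun c u := by
      rw [← hK1]; exact hd_lb
    have hr_lb : ((1-c)^2 + K₂*ε)*w^2 ≤ r^2 :=
      aux_r_lb (1-c) K₂ ε (dFun c u) r w ht hK₂pos hεpos hεt hd_lb' hw3 hr3
    have hgap : (K₂/2)*ε*w^2 ≤ r^2 - (3*u+(1-c)^2)*w^2 :=
      aux_gap (1-c) K₂ ε u r w hεpos hε2 hεK hr_lb
    have hfrac : K₂^2*u/(48*M) ≤ (r^2 - (3*u+(1-c)^2)*w^2)^2/(12*(r^2*w^2)) :=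
      aux_frac _ K₂ ε u r w M hεpos hε2 hwpos hrpos hMpos hK₂pos hgap hr_ub
    -- assemble
    rw [fDensity_eq hc hc1 hu0, ← hrdef, ← hwdef,
      show ((c:ℝ)-1)^2 = (1-c)^2 by ring]
    have hmono := Real.sqrt_le_sqrt hfrac
    have hsplit : Real.sqrt (K₂^2*u/(48*M)) = Real.sqrt (K₂^2/(48*M))*ε := by
      rw [show K₂^2*u/(48*M) = (K₂^2/(48*M))*u by ring, Real.sqrt_mul (by positivity) u, ← hεdef]
    have hCe : Real.sqrt (K₂^2/(48*M))/Real.pi * ε⁻¹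
        = (Real.pi*u)⁻¹*(Real.sqrt (K₂^2/(48*M))*ε) := by
      rw [← hε2]; field_simp
    have hεu : ε ≤ u ^ ((1:ℝ)/3) := by
      rw [hεdef, Real.sqrt_eq_rpow]
      exact Real.rpow_le_rpow_of_exponent_ge hu0 hu1 (by norm_num)
    have hinv : (u ^ ((1:ℝ)/3))⁻¹ ≤ ε⁻¹ := inv_anti₀ hεpos hεu
    calc Real.sqrt (K₂^2/(48*M))/Real.pi * (u ^ ((1:ℝ)/3))⁻¹
        ≤ Real.sqrt (K₂^2/(48*M))/Real.pi * ε⁻¹ :=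
          mul_le_mul_of_nonneg_left hinv (by positivity)
    _ = (Real.pi*u)⁻¹*(Real.sqrt (K₂^2/(48*M))*ε) := hCe
    _ = (Real.pi*u)⁻¹*Real.sqrt (K₂^2*u/(48*M)) := by rw [hsplit]
    _ ≤ (Real.pi*u)⁻¹*Real.sqrt ((r^2 - (3*u+(1-c)^2)*w^2)^2/(12*(r^2*w^2))) :=
          mul_le_mul_of_nonneg_left hmono (by positivity)
  · -- case c = 1
    subst hceq
    refine ⟨Real.sqrt (5/96)/Real.pi, by positivity, ?_⟩
    have hδpos : (0:ℝ) < (5/6:ℝ)^3 := by norm_num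
    filter_upwards [Ioo_mem_nhdsGT_of_mem (Set.mem_Ico.2 ⟨le_refl (0:ℝ), hδpos⟩)] with u hu
    obtain ⟨hu0, huδ⟩ := hu
    have hune : u ≠ 0 := ne_of_gt hu0
    obtain ⟨ε, hεdef⟩ : ∃ x : ℝ, x = u ^ ((1:ℝ)/3) := ⟨_, rfl⟩
    have hεpos : 0 < ε := by rw [hεdef]; exact Real.rpow_pos_of_pos hu0 _
    have hεne : ε ≠ 0 := ne_of_gt hεpos
    have hε3 : ε^3 = u := by
      rw [hεdef, ← Real.rpow_natCast (u ^ ((1:ℝ)/3)) 3, ← Real.rpow_mul hu0.le]; norm_num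
    have hεle : ε ≤ 5/6 := by
      apply le_of_pow_le_pow_left₀ (n := 3) (by norm_num) (by norm_num)
      rw [hε3]; exact huδ.le
    have hu1 : u ≤ 1 := by nlinarith
    have hd : 0 < dFun 1 u := dFun_pos one_pos le_rfl hu0
    obtain ⟨r, hrdef⟩ : ∃ x : ℝ, x = realCbrt (dFun 1 u) := ⟨_, rfl⟩
    have hrpos : 0 < r := by rw [hrdef]; exact realCbrt_pos hd
    have hr3 : r^3 = dFun 1 u := by rw [hrdef]; exact realCbrt_cube hd.le
    have hsqnn : (0:ℝ) ≤ Real.sqrt (u * (-4 * u ^ 2 + (-1 + 4 * 1 * (5 + 2 * 1)) * u - 4 * 1 * ((1:ℝ) - 1) ^ 3)) := Real.sqrt_nonneg _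
    have hs3nn : (0:ℝ) ≤ Real.sqrt 3 := Real.sqrt_nonneg _
    have hdl : 27*u ≤ dFun 1 u := by
      unfold dFun
      nlinarith [mul_nonneg hs3nn hsqnn]
    have hS_ub : u * (-4 * u ^ 2 + (-1 + 4 * 1 * (5 + 2 * 1)) * u - 4 * 1 * ((1:ℝ) - 1) ^ 3) ≤ (6*u)^2 := by
      nlinarith [pow_pos hu0 3]
    have hsq6 : Real.sqrt (u * (-4 * u ^ 2 + (-1 + 4 * 1 * (5 + 2 * 1)) * u - 4 * 1 * ((1:ℝ) - 1) ^ 3)) ≤ 6*u := by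
      calc Real.sqrt _ ≤ Real.sqrt ((6*u)^2) := Real.sqrt_le_sqrt hS_ub
      _ = 6*u := Real.sqrt_sq (by positivity)
    have hs3le2 : Real.sqrt 3 ≤ 2 := by
      rw [show (2:ℝ) = Real.sqrt (2^2) from (Real.sqrt_sq (by norm_num)).symm]
      exact Real.sqrt_le_sqrt (by norm_num)
    have hdu : dFun 1 u ≤ 63 := by
      have h := mul_le_mul hs3le2 hsq6 hsqnn (by norm_num)
      unfold dFun
      nlinarith
    have hru : r^2 ≤ 10*w^2 := aux1_ru (dFun 1 u) r w hd hdu hw3 hr3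
    have hrl : 5*ε^2*w^2 ≤ r^2 := aux1_rl u ε (dFun 1 u) r w hu0 hε3 hdl hw3 hr3
    have hgap : (5/2)*ε^2*w^2 ≤ r^2 - 3*u*w^2 := aux1_gap u ε r w hεpos hεle hε3 hrl
    have hinner : 5/96 * (ε^2)^2 ≤ (r^2 - 3*u*w^2)^2 / (12*(r^2*w^2)) :=
      aux1_frac u ε r w hεpos hε3 hwpos hrpos hgap hru
    rw [fDensity_eq one_pos le_rfl hu0, ← hrdef, ← hwdef,
      show (3*u+((1:ℝ)-1)^2) = 3*u by norm_num, show (3*u*w^2 : ℝ) = 3*u*w^2 from rfl]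
    have hmono := Real.sqrt_le_sqrt hinner
    have hsplit : Real.sqrt (5/96 * (ε^2)^2) = Real.sqrt (5/96)*ε^2 := by
      rw [Real.sqrt_mul (by norm_num) ((ε^2)^2), Real.sqrt_sq (sq_nonneg ε)]
    have hCe : Real.sqrt (5/96)/Real.pi * ε⁻¹
        = (Real.pi*u)⁻¹*(Real.sqrt (5/96)*ε^2) := by
      rw [← hε3]; field_simp
    calc Real.sqrt (5/96)/Real.pi * (u ^ ((1:ℝ)/3))⁻¹
        = Real.sqrt (5/96)/Real.pi * ε⁻¹ := by rw [hεdef]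
    _ = (Real.pi*u)⁻¹*(Real.sqrt (5/96)*ε^2) := hCe
    _ = (Real.pi*u)⁻¹*Real.sqrt (5/96 * (ε^2)^2) := by rw [hsplit]
    _ ≤ (Real.pi*u)⁻¹*Real.sqrt ((r^2 - 3*u*w^2)^2/(12*(r^2*w^2))) :=
          mul_le_mul_of_nonneg_left hmono (by positivity)

open Filter in
open scoped Topology in
theorem density_blows_up_at_zero (c : ℝ) (hc : 0 < c) (hc1 : c ≤ 1) :
    Tendsto (fun u => fDensity c u) (𝓝[>] (0 : ℝ)) atTop := by
  obtain ⟨C, hC, hev⟩ := eventual_lower c hc hc1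
  exact tendsto_atTop_mono' _ hev (model_tendsto hC)
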